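/- arXiv:1901.01301 — 6 statements merged into one kernel-verified Lean document; each statement's English description precedes it below -/
import Mathlib

section
/- Let Γ be a group, N a normal subgroup of Γ, Q = Γ/N the quotient group with projection π : Γ → Q, and s : Q → Γ a set-theoretic section of π (π(s(B)) = B for all B ∈ Q) with s(1) = 1. For μ ∈ Γ and B ∈ Q set ρ_μ(B) = s(B)·μ·s(B·π(μ))⁻¹, which lies in N, and let φ_μ : Q → Q be the bijection B ↦ B·π(μ). Let W be the wreath-product group whose underlying set is (Q → N) × Perm(Q) with multiplication (ρ,φ)·(σ,ψ) = (B ↦ ρ(B)·σ(φ(B)), ψ∘φ). Then the map θ : Γ → W defined by θ(μ) = (ρ_μ, φ_μ) is an injective group homomorphism (the Kaloujnin–Krasner embedding). -/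
/-! The correction term `ρ_μ(B) = s(B)·μ·s(B·π(μ))⁻¹` telescopes: in
`ρ_μ(B)·ρ_ν(B·π(μ))` the factors `s(B·π(μ))⁻¹·s(B·π(μ))` cancel, leaving `ρ_{μν}(B)`,
which is exactly the wreath-product law. Injectivity is read off at `B = 1`:
equal permutations give `π(μ) = π(ν)`, and then `s(1)·μ = s(1)·ν`. -/

namespace QuotientGroup

variable {Γ : Type*} [Group Γ] {N : Subgroup Γ} [N.Normal] {s : Γ ⧸ N → Γ}

theorem section_mul_mul_inv_mem (hs : ∀ B : Γ ⧸ N, (s B : Γ ⧸ N) = B) (μ : Γ) (B : Γ ⧸ N) :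
    s B * μ * (s (B * μ))⁻¹ ∈ N := by
  rw [← eq_one_iff]
  simp [hs, mk_mul]

variable (hs : ∀ B : Γ ⧸ N, (s B : Γ ⧸ N) = B)

def sectionCocycle (μ : Γ) : Γ ⧸ N → N :=
  fun B => ⟨s B * μ * (s (B * μ))⁻¹, section_mul_mul_inv_mem hs μ B⟩

@[simp]
theorem coe_sectionCocycle (μ : Γ) (B : Γ ⧸ N) :
    (sectionCocycle hs μ B : Γ) = s B * μ * (s (B * μ))⁻¹ :=
  rfl

theorem sectionCocycle_mul (μ ν : Γ) (B : Γ ⧸ N) :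
    sectionCocycle hs (μ * ν) B = sectionCocycle hs μ B * sectionCocycle hs ν (B * μ) := by
  ext
  simp only [coe_sectionCocycle, Subgroup.coe_mul, mk_mul, mul_assoc]
  group

theorem sectionCocycle_one : sectionCocycle hs 1 = 1 := by
  funext B
  ext
  simp

def kaloujninKrasner (μ : Γ) : (Γ ⧸ N → N) × Equiv.Perm (Γ ⧸ N) :=
  (sectionCocycle hs μ, Equiv.mulRight (μ : Γ ⧸ N))

theorem kaloujninKrasner_injective : Function.Injective (kaloujninKrasner hs) := by
  intro μ ν h
  have hπ : (μ : Γ ⧸ N) = ν := by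
    simpa [kaloujninKrasner] using congrArg (fun θ => θ.2 1) h
  have hρ := congrArg (fun θ => (θ.1 1 : Γ)) h
  simp only [kaloujninKrasner, coe_sectionCocycle, one_mul, hπ] at hρ
  exact mul_left_cancel (mul_right_cancel hρ)

theorem kaloujninKrasner_mul (μ ν : Γ) :
    kaloujninKrasner hs (μ * ν) =
      (fun B =>
          (kaloujninKrasner hs μ).1 B * (kaloujninKrasner hs ν).1 ((kaloujninKrasner hs μ).2 B),
        (kaloujninKrasner hs ν).2 * (kaloujninKrasner hs μ).2) := by
  refine Prod.ext (funext (sectionCocycle_mul hs μ ν)) ?_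
  ext B
  simp [kaloujninKrasner, mul_assoc]

theorem kaloujninKrasner_one : kaloujninKrasner hs 1 = (fun _ => 1, 1) := by
  refine Prod.ext (sectionCocycle_one hs) ?_
  ext B
  simp [kaloujninKrasner]

end QuotientGroup

theorem kaloujnin_krasner_embedding_general
    {Γ : Type*} [Group Γ] (N : Subgroup Γ) [N.Normal]
    (s : Γ ⧸ N → Γ)
    (hs : ∀ B : Γ ⧸ N, (QuotientGroup.mk (s B) : Γ ⧸ N) = B) :
    ∃ θ : Γ → (Γ ⧸ N → N) × Equiv.Perm (Γ ⧸ N),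
      -- the first component of `θ μ` is `ρ_μ`
      (∀ (μ : Γ) (B : Γ ⧸ N),
        ((θ μ).1 B : Γ) = s B * μ * (s (B * (QuotientGroup.mk μ : Γ ⧸ N)))⁻¹) ∧
      -- the second component of `θ μ` is the bijection `φ_μ : B ↦ B·π(μ)`
      (∀ (μ : Γ) (B : Γ ⧸ N), (θ μ).2 B = B * (QuotientGroup.mk μ : Γ ⧸ N)) ∧
      -- `θ` is injective
      Function.Injective θ ∧
      -- `θ` is a homomorphism for the wreath-product multiplication
      (∀ μ ν : Γ,
        θ (μ * ν) =
          (fun B => (θ μ).1 B * (θ ν).1 ((θ μ).2 B), (θ ν).2 * (θ μ).2)) ∧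
      -- `θ` sends the identity to the identity of the wreath product
      θ 1 = (fun _ => 1, 1) := by
  exact ⟨QuotientGroup.kaloujninKrasner hs, fun _ _ => rfl, fun _ _ => rfl,
    QuotientGroup.kaloujninKrasner_injective hs, QuotientGroup.kaloujninKrasner_mul hs,
    QuotientGroup.kaloujninKrasner_one hs⟩

/-- **The Kaloujnin–Krasner embedding.**
Let `Γ` be a group, `N ⊴ Γ`, `Q = Γ ⧸ N` with projection `π`, and `s : Q → Γ` a
set-theoretic section of `π` with `s 1 = 1`.  For `μ ∈ Γ` and `B ∈ Q` let
`ρ_μ(B) = s(B)·μ·s(B·π(μ))⁻¹ ∈ N` and let `φ_μ : Q → Q` be the bijection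
`B ↦ B·π(μ)`.  Then the map `θ(μ) = (ρ_μ, φ_μ)` from `Γ` into the wreath product
whose underlying set is `(Q → N) × Perm Q` with multiplication
`(ρ,φ)·(σ,ψ) = (B ↦ ρ(B)·σ(φ(B)), ψ∘φ)` is an injective group homomorphism.
(In `Equiv.Perm Q`, `ψ * φ` is the composition `ψ ∘ φ`.) -/
theorem kaloujnin_krasner_embedding
    {Γ : Type*} [Group Γ] (N : Subgroup Γ) [N.Normal]
    (s : Γ ⧸ N → Γ)
    (hs : ∀ B : Γ ⧸ N, (QuotientGroup.mk (s B) : Γ ⧸ N) = B)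
    (hs1 : s 1 = 1) :
    ∃ θ : Γ → (Γ ⧸ N → N) × Equiv.Perm (Γ ⧸ N),
      -- the first component of `θ μ` is `ρ_μ`
      (∀ (μ : Γ) (B : Γ ⧸ N),
        ((θ μ).1 B : Γ) = s B * μ * (s (B * (QuotientGroup.mk μ : Γ ⧸ N)))⁻¹) ∧
      -- the second component of `θ μ` is the bijection `φ_μ : B ↦ B·π(μ)`
      (∀ (μ : Γ) (B : Γ ⧸ N), (θ μ).2 B = B * (QuotientGroup.mk μ : Γ ⧸ N)) ∧
      -- `θ` is injective
      Function.Injective θ ∧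
      -- `θ` is a homomorphism for the wreath-product multiplication
      (∀ μ ν : Γ,
        θ (μ * ν) =
          (fun B => (θ μ).1 B * (θ ν).1 ((θ μ).2 B), (θ ν).2 * (θ μ).2)) ∧
      -- `θ` sends the identity to the identity of the wreath product
      θ 1 = (fun _ => 1, 1) :=
  kaloujnin_krasner_embedding_general N s hs
end

section
/- Let Γ be a group and N a normal subgroup of finite index K, with quotient Q = Γ/N (so Q is finite of cardinality K), projection π : Γ → Q, and a section s : Q → Γ with s(1) = 1; for μ ∈ Γ and B ∈ Q set ρ_μ(B) = s(B)·μ·s(B·π(μ))⁻¹ ∈ N. Let h : N → ℝ be a function with defect at most D, i.e. |h(ab) − h(a) − h(b)| ≤ D for all a, b ∈ N. Define H : Γ → ℝ by H(μ) = Σ_{B ∈ Q} h(ρ_μ(B)). Then H is a quasimorphism with defect at most K·D, i.e. |H(μν) − H(μ) − H(ν)| ≤ K·D for all μ, ν ∈ Γ. -/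
/-!
The elements `ρ_μ(B)` satisfy the cocycle identity `ρ_{μν}(B) = ρ_μ(B) · ρ_ν(B·π(μ))`. Since
`B ↦ B·π(μ)` permutes `Q`, `H(ν)` is also the sum of the `h(ρ_ν(B·π(μ)))`, so `H(μν) − H(μ) − H(ν)`
is a sum of `K` defects of `h`, each at most `D` in absolute value.
-/

theorem section_mul_mul_inv_mul {Γ Q : Type*} [Group Γ] [Monoid Q] (π : Γ →* Q) (s : Q → Γ)
    (μ ν : Γ) (B : Q) :
    s B * (μ * ν) * (s (B * π (μ * ν)))⁻¹ =
      s B * μ * (s (B * π μ))⁻¹ * (s (B * π μ) * ν * (s (B * π μ * π ν))⁻¹) := by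
  simp only [map_mul, mul_assoc, inv_mul_cancel_left]

theorem abs_sum_mul_sub_sum_sub_sum_le {G ι : Type*} [Mul G] [Fintype ι] {f : G → ℝ} {D : ℝ}
    (hf : ∀ a b : G, |f (a * b) - f a - f b| ≤ D) (a b : ι → G) :
    |∑ i, f (a i * b i) - ∑ i, f (a i) - ∑ i, f (b i)| ≤ Fintype.card ι * D := by
  rw [← Finset.sum_sub_distrib, ← Finset.sum_sub_distrib]
  calc |∑ i, (f (a i * b i) - f (a i) - f (b i))|
      ≤ ∑ i, |f (a i * b i) - f (a i) - f (b i)| := Finset.abs_sum_le_sum_abs _ _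
    _ ≤ ∑ _i : ι, D := Finset.sum_le_sum fun i _ => hf (a i) (b i)
    _ = Fintype.card ι * D := by simp

theorem induced_quasimorphism_defect_general
    {Γ : Type*} [Group Γ] (N : Subgroup Γ) [N.Normal] [Fintype (Γ ⧸ N)]
    (K : ℕ) (hK : Fintype.card (Γ ⧸ N) = K)
    (s : Γ ⧸ N → Γ)
    (ρ : Γ → Γ ⧸ N → N)
    (hρ : ∀ (μ : Γ) (B : Γ ⧸ N),
      (ρ μ B : Γ) = s B * μ * (s (B * (QuotientGroup.mk μ : Γ ⧸ N)))⁻¹)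
    (h : N → ℝ) (D : ℝ)
    (hD : ∀ a b : N, |h (a * b) - h a - h b| ≤ D)
    (H : Γ → ℝ)
    (hH : ∀ μ : Γ, H μ = ∑ B : Γ ⧸ N, h (ρ μ B)) :
    ∀ μ ν : Γ, |H (μ * ν) - H μ - H ν| ≤ (K : ℝ) * D := by
  intro μ ν
  have cocycle : ∀ B : Γ ⧸ N, ρ (μ * ν) B = ρ μ B * ρ ν (B * μ) := fun B => by
    ext
    simpa only [Subgroup.coe_mul, hρ, QuotientGroup.mk'_apply, mul_assoc] using
      section_mul_mul_inv_mul (QuotientGroup.mk' N) s μ ν B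
  have reindex : ∑ B : Γ ⧸ N, h (ρ ν B) = ∑ B : Γ ⧸ N, h (ρ ν (B * μ)) :=
    (Equiv.sum_comp (Equiv.mulRight (μ : Γ ⧸ N)) (fun B => h (ρ ν B))).symm
  rw [hH, hH, hH, reindex, ← hK]
  simpa only [cocycle] using
    abs_sum_mul_sub_sum_sub_sum_le hD (fun B => ρ μ B) (fun B => ρ ν (B * μ))

/-- Let `N ⊴ Γ` have finite index `K` with finite quotient `Q = Γ ⧸ N`, let
`s : Q → Γ` be a section of the projection with `s 1 = 1`, and set
`ρ_μ(B) = s(B)·μ·s(B·π(μ))⁻¹ ∈ N`.  If `h : N → ℝ` has defect at most `D`,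
then `H(μ) = ∑_{B ∈ Q} h(ρ_μ(B))` is a quasimorphism on `Γ` with defect at
most `K·D`. -/
theorem induced_quasimorphism_defect
    {Γ : Type*} [Group Γ] (N : Subgroup Γ) [N.Normal] [Fintype (Γ ⧸ N)]
    (K : ℕ) (hK : Fintype.card (Γ ⧸ N) = K)
    (s : Γ ⧸ N → Γ)
    (hs : ∀ B : Γ ⧸ N, (QuotientGroup.mk (s B) : Γ ⧸ N) = B)
    (hs1 : s 1 = 1)
    (ρ : Γ → Γ ⧸ N → N)
    (hρ : ∀ (μ : Γ) (B : Γ ⧸ N),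
      (ρ μ B : Γ) = s B * μ * (s (B * (QuotientGroup.mk μ : Γ ⧸ N)))⁻¹)
    (h : N → ℝ) (D : ℝ)
    (hD : ∀ a b : N, |h (a * b) - h a - h b| ≤ D)
    (H : Γ → ℝ)
    (hH : ∀ μ : Γ, H μ = ∑ B : Γ ⧸ N, h (ρ μ B)) :
    ∀ μ ν : Γ, |H (μ * ν) - H μ - H ν| ≤ (K : ℝ) * D :=
  induced_quasimorphism_defect_general N K hK s ρ hρ h D hD H hH
end

section
/- Let Γ be a group, (h_i)_{i∈ℕ} a sequence of functions h_i : Γ → ℝ, and (f_j)_{j∈ℕ} a sequence of elements of the commutator subgroup [Γ,Γ]. Assume: (i) for every γ ∈ Γ there is C(γ) with |h_i(γ)| ≤ C(γ) for all i; (ii) for all i > j and all integers d ≥ 1, h_i(f_j^d) = 0; (iii) for all j and all d ≥ 1, h_j(f_j^d) ≥ 0; (iv) for every j, sup_{d ≥ 1} h_j(f_j^d) = ∞. Let t = (t_i) be a real sequence with Σ_i |t_i| < ∞ which is not identically zero, and define h_t(γ) = Σ_i t_i·h_i(γ). Then for every group homomorphism φ : Γ → ℝ and every bounded function b : Γ →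 ℝ, the function h_t − φ − b is unbounded on Γ; in particular h_t is not the sum of a homomorphism and a bounded function. -/
/-!
Let `j` be the first index with `t j ≠ 0`. By the triangularity condition (ii) only the `j`-th
term of `h_t` survives on the powers `f_j^d`, so `h_t(f_j^d) = t_j · h_j(f_j^d)`, which is
unbounded in absolute value by (iii) and (iv). A homomorphism to `ℝ` kills `f_j^d ∈ [Γ,Γ]`,
and a bounded `b` cannot compensate.
-/

theorem eq_zero_of_mem_commutator {G A : Type*} [Group G] [AddCommGroup A] (φ : G → A)
    (hφ : ∀ a b : G, φ (a * b) = φ a + φ b) {g : G} (hg : g ∈ commutator G) : φ g = 0 := by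
  let ψ : G →* Multiplicative A :=
    MonoidHom.mk' (fun g => Multiplicative.ofAdd (φ g)) (by simp [hφ])
  simpa [ψ, MonoidHom.mem_ker] using Abelianization.commutator_subset_ker ψ hg

theorem tsum_mul_eq_of_eq_zero_of_lt_of_eq_zero_of_gt {ι R : Type*} [LinearOrder ι]
    [NonUnitalNonAssocSemiring R] [TopologicalSpace R] {t x : ι → R} {j : ι}
    (ht : ∀ i < j, t i = 0) (hx : ∀ i, j < i → x i = 0) :
    ∑' i, t i * x i = t j * x j :=
  tsum_eq_single j fun i hij => by
    rcases hij.lt_or_gt with hi | hi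
    · rw [ht i hi, zero_mul]
    · rw [hx i hi, mul_zero]

theorem lt_abs_sub_of_add_lt_abs {a b c C : ℝ} (hb : |b| ≤ C) (hc : a + C < |c|) :
    a < |c - b| := by
  linarith [abs_sub_abs_le_abs_sub c b]

theorem ell_one_combination_unbounded_general
    {Γ : Type*} [Group Γ] (h : ℕ → Γ → ℝ) (f : ℕ → Γ)
    (hf : ∀ j : ℕ, f j ∈ commutator Γ)
    -- (ii) vanishing for `i > j`
    (hzero : ∀ i j : ℕ, j < i → ∀ d : ℕ, 1 ≤ d → h i (f j ^ d) = 0)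
    -- (iii) non-negativity on the diagonal
    (hnonneg : ∀ j : ℕ, ∀ d : ℕ, 1 ≤ d → 0 ≤ h j (f j ^ d))
    -- (iv) unboundedness on the diagonal
    (hunbdd : ∀ j : ℕ, ∀ A : ℝ, ∃ d : ℕ, 1 ≤ d ∧ A ≤ h j (f j ^ d))
    (t : ℕ → ℝ) (htne : ∃ i : ℕ, t i ≠ 0) :
    ∀ φ : Γ → ℝ, (∀ a b : Γ, φ (a * b) = φ a + φ b) →
    ∀ b : Γ → ℝ, (∃ Cb : ℝ, ∀ γ : Γ, |b γ| ≤ Cb) →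
    ∀ A : ℝ, ∃ γ : Γ, A < |(∑' i, t i * h i γ) - φ γ - b γ| := by
  rintro φ hφ b ⟨Cb, hCb⟩ A
  classical
  set j := Nat.find htne
  have htj : 0 < |t j| := abs_pos.mpr (Nat.find_spec htne)
  obtain ⟨d, hd, hlarge⟩ := hunbdd j ((A + Cb + 1) / |t j|)
  rw [div_le_iff₀ htj] at hlarge
  have hsum : ∑' i, t i * h i (f j ^ d) = t j * h j (f j ^ d) :=
    tsum_mul_eq_of_eq_zero_of_lt_of_eq_zero_of_gt
      (fun i hi => not_not.mp (Nat.find_min htne hi)) (fun i hi => hzero i j hi d hd)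
  refine ⟨f j ^ d, ?_⟩
  rw [hsum, eq_zero_of_mem_commutator φ hφ (pow_mem (hf j) d), sub_zero]
  refine lt_abs_sub_of_add_lt_abs (hCb _) ?_
  rw [abs_mul, abs_of_nonneg (hnonneg j d hd)]
  linarith

/-- Let `(h_i)` be pointwise uniformly bounded functions on a group `Γ` and
`(f_j)` elements of the commutator subgroup `[Γ,Γ]` such that `h_i(f_j^d) = 0`
for `i > j`, `d ≥ 1`; `h_j(f_j^d) ≥ 0` for all `j`, `d ≥ 1`; and
`sup_{d ≥ 1} h_j(f_j^d) = ∞` for every `j`.  Then for every nonzero `ℓ¹`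
sequence `t`, the function `h_t(γ) = ∑_i t_i·h_i(γ)` differs from every sum of
a homomorphism `Γ → ℝ` and a bounded function by an unbounded amount. -/
theorem ell_one_combination_unbounded
    {Γ : Type*} [Group Γ] (h : ℕ → Γ → ℝ) (f : ℕ → Γ)
    (hf : ∀ j : ℕ, f j ∈ commutator Γ)
    -- (i) pointwise uniform boundedness
    (hC : ∀ γ : Γ, ∃ C : ℝ, ∀ i : ℕ, |h i γ| ≤ C)
    -- (ii) vanishing for `i > j`
    (hzero : ∀ i j : ℕ, j < i → ∀ d : ℕ, 1 ≤ d → h i (f j ^ d) = 0)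
    -- (iii) non-negativity on the diagonal
    (hnonneg : ∀ j : ℕ, ∀ d : ℕ, 1 ≤ d → 0 ≤ h j (f j ^ d))
    -- (iv) unboundedness on the diagonal
    (hunbdd : ∀ j : ℕ, ∀ A : ℝ, ∃ d : ℕ, 1 ≤ d ∧ A ≤ h j (f j ^ d))
    (t : ℕ → ℝ) (ht : Summable fun i => |t i|) (htne : ∃ i : ℕ, t i ≠ 0) :
    ∀ φ : Γ → ℝ, (∀ a b : Γ, φ (a * b) = φ a + φ b) →
    ∀ b : Γ → ℝ, (∃ Cb : ℝ, ∀ γ : Γ, |b γ| ≤ Cb) →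
    ∀ A : ℝ, ∃ γ : Γ, A < |(∑' i, t i * h i γ) - φ γ - b γ| :=
  ell_one_combination_unbounded_general h f hf hzero hnonneg hunbdd t htne
end

section
/- (Synchronization Property.) Let X be a geodesic metric space, k ≥ 1, c ≥ 0, and L ≥ 0 a thinness constant for (k,c)-quasigeodesic quadrilaterals in X, i.e.: for any four points w,x,y,z ∈ X and any continuous (k,c)-quasigeodesics joining w to x, x to y, y to z, and z to w, the first is contained in the L-neighborhood of the union of the other three. Let h be an isometry of X and ℓ : ℝ → X a continuous (k,c)-quasigeodesic with ℓ(s+1) = h(ℓ(s)) for all s ∈ ℝ and such that the image ℓ([0,1]) has diameter at most d(O, h(O)), where O = ℓ(0). Set L₁ = L + d(O, h(O)) and L₂ = 2L₁ + k(k(2L + 7L₁) + kc) + c. Then for every isometry g of X and all integers M, N ≥ 0: if d(O, g(O)) ≤ L₁ and d(h^M(O), g(h^N(O))) ≤ L₁, then for every integer 0 ≤ m ≤ max(M,N) one has d(h^m(O), g(h^m(O))) ≤ L₂. -/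
/-!
Put `O = ℓ 0`, so that `h^m O = ℓ m`. For `m ≤ M`, apply thinness to the quadrilateral formed by
`ℓ` on `[0, M]`, a geodesic from `ℓ M` to `g (ℓ N)`, `g ∘ ℓ` run backwards on `[0, N]`, and a
geodesic from `g O` back to `O`: the short geodesic sides force `ℓ m` to lie near `g (ℓ t)` for
some `t`, hence (rounding `t` down) within `2 L₁` of `g (ℓ n)` for an integer `n`. For `m ≤ N`
the same quadrilateral, read from the side `g ∘ ℓ`, puts `g (ℓ m)` near some `ℓ n`. Since `g`
fixes `O` up to `L₁`, the points `ℓ m` and `ℓ n` are at almost the same distance from `O`, and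
thinness of a degenerate quadrilateral shows that along `ℓ` this forces `ℓ m` and `ℓ n` to be
close; so `g` moves `ℓ m` by a bounded amount.
-/

open Set

/-- `γ` is a continuous `(k,c)`-quasigeodesic on the interval `[a,b]`. -/
def IsQuasigeodesicOn {X : Type*} [MetricSpace X]
    (k c : ℝ) (γ : ℝ → X) (a b : ℝ) : Prop :=
  ContinuousOn γ (Set.Icc a b) ∧
    ∀ s ∈ Set.Icc a b, ∀ t ∈ Set.Icc a b,
      |s - t| / k - c ≤ dist (γ s) (γ t) ∧ dist (γ s) (γ t) ≤ k * |s - t| + c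

def IsGeodesicSpace (X : Type*) [MetricSpace X] : Prop :=
  ∀ p q : X, ∃ γ : ℝ → X, γ 0 = p ∧ γ (dist p q) = q ∧
    ∀ s ∈ Icc 0 (dist p q), ∀ t ∈ Icc 0 (dist p q), dist (γ s) (γ t) = |s - t|

def ThinQuasigeodesicQuadrilaterals (k c L : ℝ) (X : Type*) [MetricSpace X] : Prop :=
  ∀ (w x y z : X) (γ₁ γ₂ γ₃ γ₄ : ℝ → X) (a₁ b₁ a₂ b₂ a₃ b₃ a₄ b₄ : ℝ),
    IsQuasigeodesicOn k c γ₁ a₁ b₁ → IsQuasigeodesicOn k c γ₂ a₂ b₂ →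
    IsQuasigeodesicOn k c γ₃ a₃ b₃ → IsQuasigeodesicOn k c γ₄ a₄ b₄ →
    γ₁ a₁ = w → γ₁ b₁ = x → γ₂ a₂ = x → γ₂ b₂ = y →
    γ₃ a₃ = y → γ₃ b₃ = z → γ₄ a₄ = z → γ₄ b₄ = w →
    ∀ s ∈ Icc a₁ b₁,
      ∃ p ∈ γ₂ '' Icc a₂ b₂ ∪ γ₃ '' Icc a₃ b₃ ∪ γ₄ '' Icc a₄ b₄, dist (γ₁ s) p ≤ L

lemma iterate_apply_zero_eq {α : Type*} {ℓ : ℝ → α} {h : α → α}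
    (hℓ : ∀ s, ℓ (s + 1) = h (ℓ s)) (n : ℕ) : h^[n] (ℓ 0) = ℓ n := by
  induction n with
  | zero => simp
  | succ n ih => rw [Function.iterate_succ_apply', ih, ← hℓ, Nat.cast_succ]

section

variable {X : Type*} [MetricSpace X]

namespace IsQuasigeodesicOn

variable {k c : ℝ} {γ : ℝ → X} {a b : ℝ}

lemma of_isometricOn (hk : 1 ≤ k) (hc : 0 ≤ c)
    (hγ : ∀ s ∈ Icc a b, ∀ t ∈ Icc a b, dist (γ s) (γ t) = |s - t|) :
    IsQuasigeodesicOn k c γ a b := by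
  refine ⟨?_, fun s hs t ht => ?_⟩
  · refine (LipschitzOnWith.of_dist_le_mul fun s hs t ht => ?_).continuousOn (K := 1)
    rw [hγ s hs t ht, NNReal.coe_one, one_mul, Real.dist_eq]
  · rw [hγ s hs t ht]
    have h0 : 0 ≤ |s - t| := abs_nonneg _
    exact ⟨by linarith [div_le_self h0 hk], by nlinarith⟩

lemma const (hc : 0 ≤ c) (p : X) (a : ℝ) : IsQuasigeodesicOn k c (fun _ => p) a a := by
  refine ⟨continuousOn_const, fun s hs t ht => ?_⟩
  obtain rfl : s = a := le_antisymm hs.2 hs.1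
  obtain rfl : t = s := le_antisymm ht.2 ht.1
  simp [hc]

lemma reverse (hγ : IsQuasigeodesicOn k c γ a b) :
    IsQuasigeodesicOn k c (fun t => γ (a + b - t)) a b := by
  have hmem : ∀ s ∈ Icc a b, a + b - s ∈ Icc a b := fun s hs =>
    ⟨by linarith [hs.2], by linarith [hs.1]⟩
  refine ⟨hγ.1.comp (by fun_prop) hmem, fun s hs t ht => ?_⟩
  have := hγ.2 _ (hmem s hs) _ (hmem t ht)
  rwa [show a + b - s - (a + b - t) = -(s - t) by ring, abs_neg] at this

lemma comp_isometry {Y : Type*} [MetricSpace Y] {g : X → Y} (hg : Isometry g)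
    (hγ : IsQuasigeodesicOn k c γ a b) : IsQuasigeodesicOn k c (g ∘ γ) a b :=
  ⟨hg.continuous.comp_continuousOn hγ.1, fun s hs t ht => by
    simpa only [Function.comp_apply, hg.dist_eq] using hγ.2 s hs t ht⟩

end IsQuasigeodesicOn

section Thin

variable {k c L : ℝ}

lemma IsGeodesicSpace.exists_segment (hX : IsGeodesicSpace X) (hk : 1 ≤ k) (hc : 0 ≤ c)
    (p q : X) :
    ∃ σ : ℝ → X, IsQuasigeodesicOn k c σ 0 (dist p q) ∧ σ 0 = p ∧ σ (dist p q) = q ∧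
      ∀ r ∈ Icc 0 (dist p q), dist p (σ r) + dist (σ r) q = dist p q := by
  obtain ⟨σ, hσ₀, hσ₁, hσ⟩ := hX p q
  refine ⟨σ, .of_isometricOn hk hc hσ, hσ₀, hσ₁, fun r hr => ?_⟩
  have hD : (0 : ℝ) ≤ dist p q := dist_nonneg
  have hpr := hσ 0 ⟨le_rfl, hD⟩ r hr
  have hrq := hσ r hr _ ⟨hD, le_rfl⟩
  rw [hσ₀] at hpr
  rw [hσ₁] at hrq
  rw [hpr, hrq, zero_sub, abs_neg, abs_of_nonneg hr.1, abs_sub_comm,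
    abs_of_nonneg (sub_nonneg.2 hr.2), add_sub_cancel]

/-- The side `γ` of the degenerate quadrilateral formed with a geodesic back from `γ b` to `γ a`
and two constant sides stays `L`-close to that geodesic. -/
lemma IsQuasigeodesicOn.dist_add_dist_le (hX : IsGeodesicSpace X)
    (hthin : ThinQuasigeodesicQuadrilaterals k c L X) (hk : 1 ≤ k) (hc : 0 ≤ c)
    {γ : ℝ → X} {a b u : ℝ} (hγ : IsQuasigeodesicOn k c γ a b) (hu : u ∈ Icc a b) :
    dist (γ a) (γ u) + dist (γ u) (γ b) ≤ dist (γ a) (γ b) + 2 * L := by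
  obtain ⟨σ, hσ, hσ₀, hσ₁, hσmid⟩ := hX.exists_segment hk hc (γ b) (γ a)
  obtain ⟨p, hp, hup⟩ := hthin _ _ _ _ γ σ _ _ a b 0 _ 0 0 0 0 hγ hσ
    (.const hc (γ a) 0) (.const hc (γ a) 0) rfl rfl hσ₀ hσ₁ rfl rfl rfl rfl u hu
  obtain ⟨q, hqmid, huq⟩ : ∃ q, dist (γ b) q + dist q (γ a) = dist (γ b) (γ a) ∧
      dist (γ u) q ≤ L := by
    rcases hp with (⟨r, hr, rfl⟩ | ⟨_, _, rfl⟩) | ⟨_, _, rfl⟩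
    · exact ⟨σ r, hσmid r hr, hup⟩
    all_goals exact ⟨γ a, by rw [dist_self, add_zero], hup⟩
  linarith [dist_triangle (γ a) q (γ u), dist_triangle (γ u) q (γ b), dist_comm (γ a) q,
    dist_comm (γ u) q, dist_comm (γ b) q, dist_comm (γ b) (γ a)]

lemma dist_le_abs_dist_sub_dist_add (hX : IsGeodesicSpace X)
    (hthin : ThinQuasigeodesicQuadrilaterals k c L X) (hk : 1 ≤ k) (hc : 0 ≤ c)
    {γ : ℝ → X} {a u v : ℝ} (hγ : ∀ b, IsQuasigeodesicOn k c γ a b) (hu : a ≤ u) (hv : a ≤ v) :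
    dist (γ u) (γ v) ≤ |dist (γ a) (γ u) - dist (γ a) (γ v)| + 2 * L := by
  rcases le_total u v with huv | hvu
  · have := (hγ v).dist_add_dist_le hX hthin hk hc ⟨hu, huv⟩
    linarith [neg_abs_le (dist (γ a) (γ u) - dist (γ a) (γ v))]
  · have := (hγ u).dist_add_dist_le hX hthin hk hc ⟨hv, hvu⟩
    linarith [le_abs_self (dist (γ a) (γ u) - dist (γ a) (γ v)), dist_comm (γ u) (γ v)]

lemma IsQuasigeodesicOn.exists_dist_le_of_dist_endpoints_le (hX : IsGeodesicSpace X)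
    (hthin : ThinQuasigeodesicQuadrilaterals k c L X) (hk : 1 ≤ k) (hc : 0 ≤ c)
    {α β : ℝ → X} {a₁ b₁ a₂ b₂ D : ℝ} (hα : IsQuasigeodesicOn k c α a₁ b₁)
    (hβ : IsQuasigeodesicOn k c β a₂ b₂) (hab : a₂ ≤ b₂)
    (ha : dist (α a₁) (β a₂) ≤ D) (hb : dist (α b₁) (β b₂) ≤ D) {s : ℝ} (hs : s ∈ Icc a₁ b₁) :
    ∃ t ∈ Icc a₂ b₂, dist (α s) (β t) ≤ L + D := by
  obtain ⟨σ, hσ, hσ₀, hσ₁, hσmid⟩ := hX.exists_segment hk hc (α b₁) (β b₂)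
  obtain ⟨τ, hτ, hτ₀, hτ₁, hτmid⟩ := hX.exists_segment hk hc (β a₂) (α a₁)
  obtain ⟨p, hp, hsp⟩ := hthin _ _ _ _ α σ _ τ a₁ b₁ 0 _ a₂ b₂ 0 _ hα hσ hβ.reverse hτ
    rfl rfl hσ₀ hσ₁ (by rw [add_sub_cancel_left]) (by rw [add_sub_cancel_right]) hτ₀ hτ₁ s hs
  rcases hp with (⟨r, hr, rfl⟩ | ⟨r, hr, rfl⟩) | ⟨r, hr, rfl⟩
  · refine ⟨b₂, right_mem_Icc.2 hab, ?_⟩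
    linarith [dist_triangle (α s) (σ r) (β b₂), hσmid r hr, dist_nonneg (x := α b₁) (y := σ r)]
  · exact ⟨a₂ + b₂ - r, ⟨by linarith [hr.2], by linarith [hr.1]⟩,
      by linarith [dist_nonneg (x := α a₁) (y := β a₂)]⟩
  · refine ⟨a₂, left_mem_Icc.2 hab, ?_⟩
    linarith [dist_triangle (α s) (τ r) (β a₂), hτmid r hr, dist_nonneg (x := τ r) (y := α a₁),
      dist_comm (τ r) (β a₂), dist_comm (β a₂) (α a₁)]

end Thin

section Equivariant

variable {ℓ : ℝ → X} {h : X → X}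

lemma dist_add_natCast (hh : Isometry h) (hℓ : ∀ s, ℓ (s + 1) = h (ℓ s)) (s t : ℝ) (n : ℕ) :
    dist (ℓ (s + n)) (ℓ (t + n)) = dist (ℓ s) (ℓ t) := by
  induction n with
  | zero => simp
  | succ n ih => rw [Nat.cast_succ, ← add_assoc, ← add_assoc, hℓ, hℓ, hh.dist_eq, ih]

lemma exists_nat_dist_le (hh : Isometry h) (hℓ : ∀ s, ℓ (s + 1) = h (ℓ s)) {D : ℝ}
    (hfund : ∀ s ∈ Icc (0 : ℝ) 1, dist (ℓ s) (ℓ 0) ≤ D) {t : ℝ} (ht : 0 ≤ t) :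
    ∃ n : ℕ, dist (ℓ t) (ℓ n) ≤ D := by
  refine ⟨⌊t⌋₊, ?_⟩
  have := dist_add_natCast hh hℓ (t - ⌊t⌋₊) 0 ⌊t⌋₊
  rw [sub_add_cancel, zero_add] at this
  rw [this]
  exact hfund _ ⟨by linarith [Nat.floor_le ht], by linarith [Nat.lt_floor_add_one t]⟩

end Equivariant

lemma dist_apply_self_le {g : X → X} (hg : Isometry g) {O x y : X} {A B D : ℝ}
    (hO : dist O (g O) ≤ A) (hxy : dist x y ≤ |dist O x - dist O y| + B)
    (hnear : dist x (g y) ≤ D ∨ dist (g x) y ≤ D) : dist x (g x) ≤ A + B + 2 * D := by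
  rcases hnear with hnear | hnear
  · have := dist_dist_dist_le O x (g O) (g y)
    rw [hg.dist_eq, Real.dist_eq] at this
    linarith [dist_triangle x (g y) (g x), hg.dist_eq y x, dist_comm x y]
  · have := dist_dist_dist_le (g O) (g x) O y
    rw [hg.dist_eq, Real.dist_eq] at this
    linarith [dist_triangle x y (g x), dist_comm O (g O), dist_comm (g x) y]

end

theorem synchronization_property_general
    {X : Type*} [MetricSpace X]
    (k c L : ℝ) (hk : 1 ≤ k) (hc : 0 ≤ c) (hL : 0 ≤ L)
    -- `X` is a geodesic metric space
    (hgeo : ∀ p q : X, ∃ γ : ℝ → X, γ 0 = p ∧ γ (dist p q) = q ∧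
        ∀ s ∈ Set.Icc 0 (dist p q), ∀ t ∈ Set.Icc 0 (dist p q),
          dist (γ s) (γ t) = |s - t|)
    -- `L` is a thinness constant for `(k,c)`-quasigeodesic quadrilaterals:
    -- each side lies in the `L`-neighborhood of the union of the other three
    (hthin : ∀ (w x y z : X) (γ₁ γ₂ γ₃ γ₄ : ℝ → X)
        (a₁ b₁ a₂ b₂ a₃ b₃ a₄ b₄ : ℝ),
      IsQuasigeodesicOn k c γ₁ a₁ b₁ → IsQuasigeodesicOn k c γ₂ a₂ b₂ →
      IsQuasigeodesicOn k c γ₃ a₃ b₃ → IsQuasigeodesicOn k c γ₄ a₄ b₄ →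
      γ₁ a₁ = w → γ₁ b₁ = x → γ₂ a₂ = x → γ₂ b₂ = y →
      γ₃ a₃ = y → γ₃ b₃ = z → γ₄ a₄ = z → γ₄ b₄ = w →
      ∀ s ∈ Set.Icc a₁ b₁,
        ∃ p ∈ γ₂ '' Set.Icc a₂ b₂ ∪ γ₃ '' Set.Icc a₃ b₃ ∪ γ₄ '' Set.Icc a₄ b₄,
          dist (γ₁ s) p ≤ L)
    -- `h` is an isometry of `X`
    (h : X → X) (hh : Isometry h)
    -- `ℓ` is a continuous `(k,c)`-quasigeodesic with `ℓ(s+1) = h(ℓ(s))`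
    (ℓ : ℝ → X) (hℓcont : Continuous ℓ)
    (hℓqg : ∀ s t : ℝ,
      |s - t| / k - c ≤ dist (ℓ s) (ℓ t) ∧ dist (ℓ s) (ℓ t) ≤ k * |s - t| + c)
    (hℓequiv : ∀ s : ℝ, ℓ (s + 1) = h (ℓ s))
    (O : X) (hO : O = ℓ 0)
    -- the fundamental domain `ℓ([0,1])` has diameter at most `d(O, h(O))`
    (hfund : ∀ s ∈ Set.Icc (0 : ℝ) 1, ∀ t ∈ Set.Icc (0 : ℝ) 1,
      dist (ℓ s) (ℓ t) ≤ dist O (h O))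
    (L₁ L₂ : ℝ)
    (hL₁ : L₁ = L + dist O (h O))
    (hL₂ : L₂ = 2 * L₁ + k * (k * (2 * L + 7 * L₁) + k * c) + c)
    -- `g` is an isometry of `X`
    (g : X → X) (hg : Isometry g)
    (M N : ℕ)
    (hgO : dist O (g O) ≤ L₁)
    (hgMN : dist (h^[M] O) (g (h^[N] O)) ≤ L₁) :
    ∀ m : ℕ, m ≤ max M N → dist (h^[m] O) (g (h^[m] O)) ≤ L₂ := by
  intro m hm
  subst hO
  simp only [iterate_apply_zero_eq hℓequiv] at hgMN ⊢
  have hℓ : ∀ a b, IsQuasigeodesicOn k c ℓ a b := fun a b =>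
    ⟨hℓcont.continuousOn, fun s _ t _ => hℓqg s t⟩
  have hround {t : ℝ} (ht : 0 ≤ t) : ∃ n : ℕ, dist (ℓ t) (ℓ n) ≤ dist (ℓ 0) (h (ℓ 0)) :=
    exists_nat_dist_le hh hℓequiv (fun s hs => hfund s hs 0 ⟨le_rfl, zero_le_one⟩) ht
  obtain ⟨n, hn⟩ : ∃ n : ℕ, dist (ℓ m) (g (ℓ n)) ≤ 2 * L₁ ∨ dist (g (ℓ m)) (ℓ n) ≤ 2 * L₁ := by
    rcases le_max_iff.1 hm with hmM | hmN
    · obtain ⟨t, ht, hmt⟩ := (hℓ 0 M).exists_dist_le_of_dist_endpoints_le hgeo hthin hk hc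
        ((hℓ 0 N).comp_isometry hg) N.cast_nonneg hgO hgMN ⟨m.cast_nonneg, by exact_mod_cast hmM⟩
      rw [Function.comp_apply] at hmt
      obtain ⟨n, htn⟩ := hround ht.1
      exact ⟨n, .inl (by
        linarith [dist_triangle (ℓ m) (g (ℓ t)) (g (ℓ n)), hg.dist_eq (ℓ t) (ℓ n), hL₁])⟩
    · obtain ⟨t, ht, hmt⟩ := ((hℓ 0 N).comp_isometry hg).exists_dist_le_of_dist_endpoints_le
        hgeo hthin hk hc (hℓ 0 M) M.cast_nonneg (D := L₁) (by rwa [dist_comm]) (by rwa [dist_comm])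
        ⟨m.cast_nonneg, by exact_mod_cast hmN⟩
      rw [Function.comp_apply] at hmt
      obtain ⟨n, htn⟩ := hround ht.1
      exact ⟨n, .inr (by linarith [dist_triangle (g (ℓ m)) (ℓ t) (ℓ n), hL₁])⟩
  have hmn := dist_le_abs_dist_sub_dist_add hgeo hthin hk hc (hℓ 0) (Nat.cast_nonneg m)
    (Nat.cast_nonneg n)
  have hk₀ : 0 ≤ k := zero_le_one.trans hk
  have hL₁₀ : 0 ≤ L₁ := by linarith [dist_nonneg (x := ℓ 0) (y := h (ℓ 0))]
  have hk2 : 2 * L + 7 * L₁ ≤ k * (k * (2 * L + 7 * L₁)) := by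
    rw [← mul_assoc]
    exact le_mul_of_one_le_left (by positivity) (one_le_mul_of_one_le_of_one_le hk hk)
  calc dist (ℓ m) (g (ℓ m)) ≤ L₁ + 2 * L + 2 * (2 * L₁) := dist_apply_self_le hg hgO hmn hn
    _ ≤ L₂ := by rw [hL₂]; nlinarith [mul_nonneg hk₀ (mul_nonneg hk₀ hc)]

/-- **The Synchronization Property.**
Let `X` be a geodesic metric space, `k ≥ 1`, `c ≥ 0`, and let `L ≥ 0` be a
thinness constant for `(k,c)`-quasigeodesic quadrilaterals in `X`.  Let `h` be
an isometry of `X` and `ℓ : ℝ → X` a continuous `(k,c)`-quasigeodesic with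
`ℓ(s+1) = h(ℓ(s))` whose fundamental domain `ℓ([0,1])` has diameter at most
`d(O, h(O))`, where `O = ℓ(0)`.  Set `L₁ = L + d(O,h(O))` and
`L₂ = 2L₁ + k(k(2L + 7L₁) + kc) + c`.  Then for every isometry `g` of `X` and
all integers `M, N ≥ 0`: if `d(O, g(O)) ≤ L₁` and `d(h^M(O), g(h^N(O))) ≤ L₁`,
then `d(h^m(O), g(h^m(O))) ≤ L₂` for every integer `0 ≤ m ≤ max(M,N)`. -/
theorem synchronization_property
    {X : Type*} [MetricSpace X]
    (k c L : ℝ) (hk : 1 ≤ k) (hc : 0 ≤ c) (hL : 0 ≤ L)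
    -- `X` is a geodesic metric space
    (hgeo : ∀ p q : X, ∃ γ : ℝ → X, γ 0 = p ∧ γ (dist p q) = q ∧
        ∀ s ∈ Set.Icc 0 (dist p q), ∀ t ∈ Set.Icc 0 (dist p q),
          dist (γ s) (γ t) = |s - t|)
    -- `L` is a thinness constant for `(k,c)`-quasigeodesic quadrilaterals:
    -- each side lies in the `L`-neighborhood of the union of the other three
    (hthin : ∀ (w x y z : X) (γ₁ γ₂ γ₃ γ₄ : ℝ → X)
        (a₁ b₁ a₂ b₂ a₃ b₃ a₄ b₄ : ℝ),
      IsQuasigeodesicOn k c γ₁ a₁ b₁ → IsQuasigeodesicOn k c γ₂ a₂ b₂ →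
      IsQuasigeodesicOn k c γ₃ a₃ b₃ → IsQuasigeodesicOn k c γ₄ a₄ b₄ →
      γ₁ a₁ = w → γ₁ b₁ = x → γ₂ a₂ = x → γ₂ b₂ = y →
      γ₃ a₃ = y → γ₃ b₃ = z → γ₄ a₄ = z → γ₄ b₄ = w →
      ∀ s ∈ Set.Icc a₁ b₁,
        ∃ p ∈ γ₂ '' Set.Icc a₂ b₂ ∪ γ₃ '' Set.Icc a₃ b₃ ∪ γ₄ '' Set.Icc a₄ b₄,
          dist (γ₁ s) p ≤ L)
    -- `h` is an isometry of `X`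
    (h : X → X) (hh : Isometry h) (hhbij : Function.Bijective h)
    -- `ℓ` is a continuous `(k,c)`-quasigeodesic with `ℓ(s+1) = h(ℓ(s))`
    (ℓ : ℝ → X) (hℓcont : Continuous ℓ)
    (hℓqg : ∀ s t : ℝ,
      |s - t| / k - c ≤ dist (ℓ s) (ℓ t) ∧ dist (ℓ s) (ℓ t) ≤ k * |s - t| + c)
    (hℓequiv : ∀ s : ℝ, ℓ (s + 1) = h (ℓ s))
    (O : X) (hO : O = ℓ 0)
    -- the fundamental domain `ℓ([0,1])` has diameter at most `d(O, h(O))`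
    (hfund : ∀ s ∈ Set.Icc (0 : ℝ) 1, ∀ t ∈ Set.Icc (0 : ℝ) 1,
      dist (ℓ s) (ℓ t) ≤ dist O (h O))
    (L₁ L₂ : ℝ)
    (hL₁ : L₁ = L + dist O (h O))
    (hL₂ : L₂ = 2 * L₁ + k * (k * (2 * L + 7 * L₁) + k * c) + c)
    -- `g` is an isometry of `X`
    (g : X → X) (hg : Isometry g) (hgbij : Function.Bijective g)
    (M N : ℕ)
    (hgO : dist O (g O) ≤ L₁)
    (hgMN : dist (h^[M] O) (g (h^[N] O)) ≤ L₁) :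
    ∀ m : ℕ, m ≤ max M N → dist (h^[m] O) (g (h^[m] O)) ≤ L₂ :=
  synchronization_property_general k c L hk hc hL hgeo hthin h hh ℓ hℓcont hℓqg hℓequiv O hO hfund
    L₁ L₂ hL₁ hL₂ g hg M N hgO hgMN
end

section
/- Let a group Γ act by isometries on a metric space X, let h ∈ Γ, and suppose that for every x ∈ X there exist k ≥ 1 and c ≥ 0 with |m − n| ≤ k·d(h^m·x, h^n·x) + c for all integers m, n. Let S be a subgroup of Γ containing h such that the cyclic subgroup ⟨h⟩ has finite index in S. Assume h satisfies the equivariant acylindricity condition WWPD (1) with respect to S: for every x ∈ X and R > 0 there exists an integer M ≥ 1 such that every subset Z ⊆ Γ is finite whenever (a) each g ∈ Z satisfies d(x, g·x) < R and d(h^M·x, g·(h^M·x)) < R, and (b) no two elements of Z lie in the same left coset of S. Then h satisfies WPD: for every x ∈ X and R > 0 there exists an integer M ≥ 1 such that the set {g ∈ Γ : d(x, g·x) < R and d(h^M·x, g·(h^M·x)) < R} is finite. -/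
/-!
Let `B` be the set of elements moving both `x` and `h^M·x` less than `R`. WWPD, applied to a set
of representatives of the left cosets of `S` that meet `B`, shows that there are only finitely many
such cosets; as `⟨h⟩ ⊓ S` has finite index in `S`, `B` also meets only finitely many left cosets
of `⟨h⟩ ⊓ S`. Each of them meets `B` in a finite set: if `g` and `g h^n` both lie in `B`, then
`d(h^n·x, x) < 2R`, and the quasi-isometric growth of `n ↦ h^n·x` bounds `|n|`.
-/

open QuotientGroup

section Cosets

variable {Γ : Type*} [Group Γ]

lemma finite_image_mk_of_finite_of_pairwise_inv_mul_notMem {S : Subgroup Γ} {B : Set Γ}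
    (hB : ∀ Z ⊆ B, (∀ g₁ ∈ Z, ∀ g₂ ∈ Z, g₁ ≠ g₂ → g₁⁻¹ * g₂ ∉ S) → Z.Finite) :
    ((mk : Γ → Γ ⧸ S) '' B).Finite := by
  obtain ⟨Z, hZB, hZ⟩ := Set.exists_subset_bijOn B (mk : Γ → Γ ⧸ S)
  rw [← hZ.image_eq]
  exact (hB Z hZB fun g₁ h₁ g₂ h₂ hne hS => hne (hZ.injOn h₁ h₂ (QuotientGroup.eq.mpr hS))).image _

lemma finite_image_mk_inf_of_relIndex_ne_zero {K H : Subgroup Γ} (hKH : K.relIndex H ≠ 0)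
    {B : Set Γ} (hB : ((mk : Γ → Γ ⧸ H) '' B).Finite) :
    ((mk : Γ → Γ ⧸ (K ⊓ H)) '' B).Finite := by
  have : (K.subgroupOf H).FiniteIndex := ⟨hKH⟩
  have : Finite (H ⧸ (K ⊓ H).subgroupOf H) := by
    rw [Subgroup.inf_subgroupOf_right]
    infer_instance
  let e := Subgroup.quotientEquivProdOfLE (inf_le_right : K ⊓ H ≤ H)
  refine ((hB.prod Set.finite_univ).preimage e.injective.injOn).subset ?_
  rintro _ ⟨g, hg, rfl⟩
  exact ⟨⟨g, hg, rfl⟩, trivial⟩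

end Cosets

section Orbits

variable {Γ X : Type*} [Group Γ] [MetricSpace X] [MulAction Γ X] {h : Γ} {x : X} {k c : ℝ}

lemma finite_setOf_dist_zpow_smul_lt (hk : 0 ≤ k)
    (hkc : ∀ m n : ℤ, |(m : ℝ) - n| ≤ k * dist (h ^ m • x) (h ^ n • x) + c) (D : ℝ) :
    {n : ℤ | dist (h ^ n • x) x < D}.Finite := by
  refine (isCompact_closedBall (0 : ℤ) (k * D + c)).finite_of_discrete.subset fun n hn => ?_
  have hn0 := hkc n 0
  rw [zpow_zero, one_smul] at hn0
  rw [Metric.mem_closedBall, Int.dist_eq]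
  calc |(n : ℝ) - (0 : ℤ)| ≤ k * dist (h ^ n • x) x + c := hn0
    _ ≤ k * D + c := by gcongr; exact le_of_lt hn

lemma finite_setOf_dist_lt_and_inv_mul_mem_zpowers
    (hiso : ∀ (γ : Γ) (p q : X), dist (γ • p) (γ • q) = dist p q) (hk : 0 ≤ k)
    (hkc : ∀ m n : ℤ, |(m : ℝ) - n| ≤ k * dist (h ^ m • x) (h ^ n • x) + c)
    {R : ℝ} {g : Γ} (hg : dist x (g • x) < R) :
    {γ : Γ | dist x (γ • x) < R ∧ g⁻¹ * γ ∈ Subgroup.zpowers h}.Finite := by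
  refine ((finite_setOf_dist_zpow_smul_lt hk hkc (2 * R)).image fun n => g * h ^ n).subset ?_
  rintro γ ⟨hγ, hγg⟩
  obtain ⟨n, hn⟩ := Subgroup.mem_zpowers_iff.mp hγg
  refine ⟨n, ?_, show g * h ^ n = γ by rw [hn, mul_inv_cancel_left]⟩
  calc dist (h ^ n • x) x = dist (γ • x) (g • x) := by
        rw [← hiso g, smul_smul, hn, mul_inv_cancel_left]
    _ ≤ dist (γ • x) x + dist x (g • x) := dist_triangle _ _ _
    _ < 2 * R := by rw [dist_comm]; linarith

end Orbits

theorem wwpd_finite_index_implies_wpd_general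
    {Γ : Type*} [Group Γ] {X : Type*} [MetricSpace X] [MulAction Γ X]
    (hiso : ∀ (γ : Γ) (p q : X), dist (γ • p) (γ • q) = dist p q)
    (h : Γ)
    (hqi : ∀ x : X, ∃ k c : ℝ, 1 ≤ k ∧ 0 ≤ c ∧
      ∀ m n : ℤ, |(m : ℝ) - (n : ℝ)| ≤ k * dist (h ^ m • x) (h ^ n • x) + c)
    (S : Subgroup Γ)
    -- the cyclic subgroup `⟨h⟩` has finite index in `S`
    (hfin : (Subgroup.zpowers h).relIndex S ≠ 0)
    -- WWPD (1): equivariant acylindricity with respect to `S`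
    (hwwpd : ∀ (x : X) (R : ℝ), 0 < R → ∃ M : ℕ, 1 ≤ M ∧
      ∀ Z : Set Γ,
        (∀ g ∈ Z, dist x (g • x) < R ∧
          dist ((h ^ M : Γ) • x) (g • ((h ^ M : Γ) • x)) < R) →
        (∀ g₁ ∈ Z, ∀ g₂ ∈ Z, g₁ ≠ g₂ → g₁⁻¹ * g₂ ∉ S) →
        Z.Finite) :
    -- WPD
    ∀ (x : X) (R : ℝ), 0 < R → ∃ M : ℕ, 1 ≤ M ∧
      {g : Γ | dist x (g • x) < R ∧
        dist ((h ^ M : Γ) • x) (g • ((h ^ M : Γ) • x)) < R}.Finite := by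
  intro x R hR
  obtain ⟨M, hM, hZ⟩ := hwwpd x R hR
  refine ⟨M, hM, ?_⟩
  set B := {g : Γ | dist x (g • x) < R ∧ dist ((h ^ M : Γ) • x) (g • ((h ^ M : Γ) • x)) < R}
  obtain ⟨k, c, hk, -, hkc⟩ := hqi x
  have hBS : ((mk : Γ → Γ ⧸ S) '' B).Finite :=
    finite_image_mk_of_finite_of_pairwise_inv_mul_notMem fun Z hZB => hZ Z fun g hg => hZB hg
  refine (finite_image_mk_inf_of_relIndex_ne_zero hfin hBS).of_finite_fibers mk ?_
  rintro _ ⟨g, hg, rfl⟩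
  refine (finite_setOf_dist_lt_and_inv_mul_mem_zpowers hiso (by linarith) hkc hg.1).subset ?_
  rintro γ ⟨hγ, hγg⟩
  exact ⟨hγ.1, (QuotientGroup.eq.mp hγg.symm).1⟩

/-- **WWPD (1) plus `⟨h⟩` of finite index in `S` implies WPD.**
Let a group `Γ` act by isometries on a metric space `X`, let `h ∈ Γ` be such
that every orbit map `n ↦ h^n·x` is a quasi-isometric embedding of `ℤ`, and
let `S ≤ Γ` contain `h` with `⟨h⟩` of finite index in `S`.  If `h` satisfies
the equivariant acylindricity condition WWPD (1) with respect to `S` (any set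
of elements moving `x` and `h^M·x` less than `R` and lying pairwise in distinct
left cosets of `S` is finite), then `h` satisfies WPD (the full set of such
elements is finite). -/
theorem wwpd_finite_index_implies_wpd
    {Γ : Type*} [Group Γ] {X : Type*} [MetricSpace X] [MulAction Γ X]
    (hiso : ∀ (γ : Γ) (p q : X), dist (γ • p) (γ • q) = dist p q)
    (h : Γ)
    (hqi : ∀ x : X, ∃ k c : ℝ, 1 ≤ k ∧ 0 ≤ c ∧
      ∀ m n : ℤ, |(m : ℝ) - (n : ℝ)| ≤ k * dist (h ^ m • x) (h ^ n • x) + c)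
    (S : Subgroup Γ) (hhS : h ∈ S)
    -- the cyclic subgroup `⟨h⟩` has finite index in `S`
    (hfin : (Subgroup.zpowers h).relIndex S ≠ 0)
    -- WWPD (1): equivariant acylindricity with respect to `S`
    (hwwpd : ∀ (x : X) (R : ℝ), 0 < R → ∃ M : ℕ, 1 ≤ M ∧
      ∀ Z : Set Γ,
        (∀ g ∈ Z, dist x (g • x) < R ∧
          dist ((h ^ M : Γ) • x) (g • ((h ^ M : Γ) • x)) < R) →
        (∀ g₁ ∈ Z, ∀ g₂ ∈ Z, g₁ ≠ g₂ → g₁⁻¹ * g₂ ∉ S) →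
        Z.Finite) :
    -- WPD
    ∀ (x : X) (R : ℝ), 0 < R → ∃ M : ℕ, 1 ≤ M ∧
      {g : Γ | dist x (g • x) < R ∧
        dist ((h ^ M : Γ) • x) (g • ((h ^ M : Γ) • x)) < R}.Finite :=
  wwpd_finite_index_implies_wpd_general hiso h hqi S hfin hwwpd
end

section
/- Let X be a geodesic metric space that is δ-hyperbolic in the sense of the four-point Gromov product condition. Let a group Γ act on X by isometries, let h ∈ Γ, let S be a subgroup of Γ, let x ∈ X, and let B ≥ 0 be such that for all integers M ≥ 0 and 0 ≤ m ≤ M and every geodesic γ from x to h^M·x, the point h^m·x lies within distance B of the image of γ. Suppose there exists R' > 0 such that for every integer M ≥ 1 there is an infinite subset Z_M ⊆ Γ whose elements pairwise lie in distinct left cosets of S and such that every g ∈ Z_M satisfies d(x, g·x) < R' and d(h^M·x, g·(h^M·x)) < R'. Then there exist R > 0 and a sequence (g_i)_{i∈ℕ} in Γ, pairwise lying in distinct left cosets of S, such that for every integer M ≥ 0 there exists I with d(g_i·(h^m·x), h^m·x) < R for all integers 0 ≤ m ≤ M and all i ≥ I. -/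
/-!
Let `g` move both `x` and `h^M·x` by less than `R'`, and let `r` be a point of a geodesic from
`x` to `h^M·x`. The four-point condition at `g·r`, applied to `g·x`, `g·h^M·x` and `r`, shows that
`g` moves `r` by less than `R' + 2δ`; since `h^m·x` lies within `B` of such an `r`, `g` moves
`h^m·x` by less than `R' + 2δ + 2B`. So an element of `Z_{i+1}` moves each of the first `i + 1`
orbit points little, and it remains to pick `g_i ∈ Z_{i+1}` in pairwise distinct cosets of `S`,
which is possible because each `Z_{i+1}` meets infinitely many cosets.
-/

open Set

theorem exists_injective_forall_mem_of_infinite {β : Type*} {A : ℕ → Set β}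
    (hA : ∀ n, (A n).Infinite) : ∃ f : ℕ → β, Function.Injective f ∧ ∀ n, f n ∈ A n := by
  classical
  choose next next_mem next_notMem using fun n (s : Finset β) => (hA n).exists_notMem_finset s
  let used : ℕ → Finset β := fun n => Nat.rec ∅ (fun k s => insert (next k s) s) n
  have mem_used : ∀ i j, i < j → next i (used i) ∈ used j := by
    intro i j hij
    induction j, hij using Nat.le_induction with
    | base => exact Finset.mem_insert_self _ _
    | succ j _ ih => exact Finset.mem_insert_of_mem ih
  refine ⟨fun n => next n (used n), fun i j hij => ?_, fun n => next_mem n _⟩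
  simp only at hij
  by_contra hne
  rcases lt_or_gt_of_ne hne with hlt | hlt
  · exact next_notMem j _ (hij ▸ mem_used i j hlt)
  · exact next_notMem i _ (hij.symm ▸ mem_used j i hlt)

theorem QuotientGroup.mk_injOn_of_pairwise {Γ : Type*} [Group Γ] {S : Subgroup Γ} {Z : Set Γ}
    (hZ : ∀ g₁ ∈ Z, ∀ g₂ ∈ Z, g₁ ≠ g₂ → g₁⁻¹ * g₂ ∉ S) :
    InjOn (QuotientGroup.mk : Γ → Γ ⧸ S) Z := fun _ h₁ _ h₂ heq =>
  of_not_not fun hne => hZ _ h₁ _ h₂ hne (QuotientGroup.eq.mp heq)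

section Geometry

variable {X : Type*} [MetricSpace X]

noncomputable def gromovProduct (w p q : X) : ℝ := (dist p w + dist q w - dist p q) / 2

variable (X) in
def IsGromovHyperbolic (δ : ℝ) : Prop :=
  ∀ p q r w : X, min (gromovProduct w p r) (gromovProduct w q r) - δ ≤ gromovProduct w p q

theorem dist_add_dist_eq_of_isometric_on_Icc {γ : ℝ → X} {L s : ℝ}
    (hγ : ∀ s ∈ Icc 0 L, ∀ t ∈ Icc 0 L, dist (γ s) (γ t) = |s - t|) (hs : s ∈ Icc 0 L) :
    dist (γ 0) (γ s) + dist (γ s) (γ L) = L := by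
  have h0 : (0 : ℝ) ∈ Icc 0 L := ⟨le_rfl, hs.1.trans hs.2⟩
  have hL : L ∈ Icc 0 L := ⟨hs.1.trans hs.2, le_rfl⟩
  rw [hγ 0 h0 s hs, hγ s hs L hL, abs_of_nonpos (by linarith [hs.1]),
    abs_of_nonpos (by linarith [hs.2])]
  ring

theorem Isometry.dist_apply_le {f : X → X} (hf : Isometry f) (y r : X) :
    dist (f y) y ≤ dist r (f r) + 2 * dist y r := by
  have := dist_triangle4 (f y) (f r) r y
  rw [hf.dist_eq, dist_comm (f r) r, dist_comm r y] at this
  linarith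

variable {δ : ℝ}

theorem IsGromovHyperbolic.dist_apply_le_of_between (hX : IsGromovHyperbolic X δ) {f : X → X}
    (hf : Isometry f) {p q r : X} (hr : dist p r + dist r q = dist p q) :
    dist r (f r) ≤ max (dist p (f p)) (dist q (f q)) + 2 * δ := by
  -- `(f p | f q)_{f r} = (p | q)_r = 0`, so one of the other two products is at most `δ`.
  have H := hX (f p) (f q) r (f r)
  simp only [gromovProduct, hf.dist_eq] at H
  have hp := dist_triangle (f p) p r
  have hq := dist_triangle (f q) q r
  rw [dist_comm (f p) p] at hp
  rw [dist_comm (f q) q] at hq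
  rcases min_le_iff.mp (by linarith [dist_comm r q] : _ ≤ δ) with hmin | hmin <;>
    linarith [le_max_left (dist p (f p)) (dist q (f q)), le_max_right (dist p (f p)) (dist q (f q))]

theorem IsGromovHyperbolic.dist_apply_lt_of_near_between (hX : IsGromovHyperbolic X δ)
    {f : X → X} (hf : Isometry f) {p q r y : X} {B R' : ℝ} (hr : dist p r + dist r q = dist p q)
    (hyr : dist y r ≤ B) (hp : dist p (f p) < R') (hq : dist q (f q) < R') :
    dist (f y) y < R' + 2 * δ + 2 * B := by
  have := hX.dist_apply_le_of_between hf hr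
  linarith [hf.dist_apply_le y r, max_lt hp hq]

end Geometry

/-- **Failure of equivariant acylindricity WWPD (1) implies failure of the
variant condition WWPD (3)∃.**
Let `X` be a geodesic metric space which is `δ`-hyperbolic in the four-point
Gromov-product sense, let a group `Γ` act on `X` by isometries, let `h ∈ Γ`,
`S ≤ Γ`, `x ∈ X`, and let `B ≥ 0` be such that every orbit point `h^m·x`
(`0 ≤ m ≤ M`) lies within distance `B` of every geodesic from `x` to `h^M·x`.
If there is `R' > 0` such that for every `M ≥ 1` there is an infinite set
`Z_M ⊆ Γ`, pairwise in distinct left cosets of `S`, each of whose elements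
moves `x` and `h^M·x` less than `R'`, then there exist `R > 0` and a sequence
`(g_i)` in `Γ`, pairwise in distinct left cosets of `S`, such that for every
`M` there is `I` with `d(g_i·(h^m·x), h^m·x) < R` for all `0 ≤ m ≤ M`, `i ≥ I`. -/
theorem wwpd_one_failure_implies_wwpd_three_failure
    {Γ : Type*} [Group Γ] {X : Type*} [MetricSpace X] [MulAction Γ X]
    (hiso : ∀ (γ : Γ) (p q : X), dist (γ • p) (γ • q) = dist p q)
    (δ : ℝ) (hδ0 : 0 ≤ δ)
    -- `X` is `δ`-hyperbolic: four-point Gromov product condition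
    (hhyp : ∀ p q r w : X,
      min ((dist p w + dist r w - dist p r) / 2)
          ((dist q w + dist r w - dist q r) / 2) - δ ≤
        (dist p w + dist q w - dist p q) / 2)
    -- `X` is a geodesic metric space
    (hgeo : ∀ p q : X, ∃ γ : ℝ → X, γ 0 = p ∧ γ (dist p q) = q ∧
        ∀ s ∈ Set.Icc 0 (dist p q), ∀ t ∈ Set.Icc 0 (dist p q),
          dist (γ s) (γ t) = |s - t|)
    (h : Γ) (S : Subgroup Γ) (x : X)
    (B : ℝ) (hB0 : 0 ≤ B)
    -- orbit points fellow-travel geodesics between orbit points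
    (hB : ∀ M m : ℕ, m ≤ M → ∀ γ : ℝ → X,
      γ 0 = x → γ (dist x ((h ^ M : Γ) • x)) = (h ^ M : Γ) • x →
      (∀ s ∈ Set.Icc 0 (dist x ((h ^ M : Γ) • x)),
        ∀ t ∈ Set.Icc 0 (dist x ((h ^ M : Γ) • x)),
          dist (γ s) (γ t) = |s - t|) →
      ∃ s ∈ Set.Icc (0 : ℝ) (dist x ((h ^ M : Γ) • x)),
        dist ((h ^ m : Γ) • x) (γ s) ≤ B)
    (R' : ℝ) (hR' : 0 < R')
    -- failure of WWPD (1): infinitely many coset-distinct small movers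
    (hZ : ∀ M : ℕ, 1 ≤ M → ∃ Z : Set Γ, Z.Infinite ∧
      (∀ g₁ ∈ Z, ∀ g₂ ∈ Z, g₁ ≠ g₂ → g₁⁻¹ * g₂ ∉ S) ∧
      ∀ g ∈ Z, dist x (g • x) < R' ∧
        dist ((h ^ M : Γ) • x) (g • ((h ^ M : Γ) • x)) < R') :
    -- failure of WWPD (3)∃
    ∃ R : ℝ, 0 < R ∧ ∃ g : ℕ → Γ,
      (∀ i j : ℕ, i ≠ j → (g i)⁻¹ * g j ∉ S) ∧
      ∀ M : ℕ, ∃ I : ℕ, ∀ m : ℕ, m ≤ M → ∀ i : ℕ, I ≤ i →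
        dist (g i • ((h ^ m : Γ) • x)) ((h ^ m : Γ) • x) < R := by
  have near_geodesic : ∀ M m : ℕ, m ≤ M → ∃ r : X,
      dist x r + dist r ((h ^ M : Γ) • x) = dist x ((h ^ M : Γ) • x) ∧
        dist ((h ^ m : Γ) • x) r ≤ B := by
    intro M m hm
    obtain ⟨γ, hγ0, hγL, hγ⟩ := hgeo x ((h ^ M : Γ) • x)
    obtain ⟨s, hs, hsB⟩ := hB M m hm γ hγ0 hγL hγ
    refine ⟨γ s, ?_, hsB⟩
    simpa only [hγ0, hγL] using dist_add_dist_eq_of_isometric_on_Icc hγ hs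
  have hX : IsGromovHyperbolic X δ := hhyp
  choose Z hZinf hZS hZmove using fun n : ℕ => hZ (n + 1) n.succ_pos
  obtain ⟨c, hc, hcZ⟩ := exists_injective_forall_mem_of_infinite fun n =>
    (hZinf n).image (QuotientGroup.mk_injOn_of_pairwise (hZS n))
  choose g hgZ hgc using hcZ
  refine ⟨R' + 2 * δ + 2 * B, by positivity, g, fun i j hij hS => hij (hc ?_),
    fun M => ⟨M, fun m hm i hi => ?_⟩⟩
  · rw [← hgc i, ← hgc j]
    exact QuotientGroup.eq.mpr hS
  obtain ⟨r, hr, hmr⟩ := near_geodesic (i + 1) m (by omega)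
  obtain ⟨hx, hhx⟩ := hZmove i (g i) (hgZ i)
  exact hX.dist_apply_lt_of_near_between (Isometry.of_dist_eq (hiso (g i))) hr hmr hx hhx
end
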